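/- arXiv:math/0511253 — 2 statements merged into one kernel-verified Lean document; each statement's English description precedes it below -/
import Mathlib

section
/- Fix k ≥ 1 and p, q ∈ D(k). Then, as n → ∞ (n an integer, n ≥ 2), n^k · W_{kn}(p,q) converges to 1 if p = q and to 0 if p ≠ q, where W_{kn} = G_{kn}⁻¹ is the Weingarten matrix. -/
open scoped BigOperators

/-- Non-crossing pair partitions of {1,…,2k}: fixed-point-free non-crossing
involutions of `Fin (2*k)`. -/
def NCPair (k : ℕ) : Type :=
  {p : Equiv.Perm (Fin (2 * k)) //
    (∀ x, p (p x) = x) ∧ (∀ x, p x ≠ x) ∧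
    ∀ a b c d : Fin (2 * k), a < b → b < c → c < d → p a = c → p b = d → False}

instance (k : ℕ) : Fintype (NCPair k) := by unfold NCPair; infer_instance

instance (k : ℕ) : DecidableEq (NCPair k) := by unfold NCPair; infer_instance

/-- `loops p q`: the number of loops obtained by closing the composed diagram,
i.e. the number of orbits of the subgroup generated by `p` and `q` on `Fin (2*k)`. -/
noncomputable def loops {k : ℕ} (p q : NCPair k) : ℕ :=
  Nat.card (MulAction.orbitRel.Quotient
    (↥(Subgroup.closure ({p.1, q.1} : Set (Equiv.Perm (Fin (2 * k)))))) (Fin (2 * k)))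

/-- The Gram matrix `G_{kn}(p,q) = n^{l(p,q)}`. -/
noncomputable def Gram (k n : ℕ) : Matrix (NCPair k) (NCPair k) ℝ :=
  fun p q => (n : ℝ) ^ loops p q

/-- The loop distance `d(p,q) = k - l(p,q)`. -/
noncomputable def loopDist {k : ℕ} (p q : NCPair k) : ℕ := k - loops p q

/-! Every orbit of the group generated by `p` and `q` contains `x` and `p x ≠ x`, so it has at
least two points and `l(p,q) ≤ k`; equality forces every orbit to be `{x, p x} = {x, q x}`, i.e.
`p = q`. Hence `n⁻ᵏ • G_{kn} → 1` entrywise, and since matrix inversion is continuous at `1`,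
`n^k • W_{kn} = (n⁻ᵏ • G_{kn})⁻¹ → 1`. -/

namespace MulAction

variable {G α : Type*} [Group G] [MulAction G α]

theorem nat_card_eq_sum_ncard_orbit [Finite α] [Fintype (orbitRel.Quotient G α)] :
    Nat.card α = ∑ ω : orbitRel.Quotient G α, ω.orbit.ncard := by
  rw [Nat.card_congr (selfEquivSigmaOrbits' G α), Nat.card_sigma]
  simp only [Nat.card_coe_set_eq]

theorem orbitRel.Quotient.forall_ncard_orbit {P : ℕ → Prop}
    (h : ∀ x : α, P (MulAction.orbit G x).ncard) (ω : orbitRel.Quotient G α) :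
    P ω.orbit.ncard := by
  induction ω using Quotient.inductionOn' with
  | h x => simpa only [orbitRel.Quotient.orbit_mk] using h x

variable [Finite α]

theorem mul_card_quotient_le_card {n : ℕ} (h : ∀ x : α, n ≤ (orbit G x).ncard) :
    n * Nat.card (orbitRel.Quotient G α) ≤ Nat.card α := by
  have := Fintype.ofFinite (orbitRel.Quotient G α)
  calc n * Nat.card (orbitRel.Quotient G α) = ∑ _ω : orbitRel.Quotient G α, n := by
        simp [Nat.card_eq_fintype_card, mul_comm]
    _ ≤ ∑ ω : orbitRel.Quotient G α, ω.orbit.ncard :=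
        Finset.sum_le_sum fun ω _ => orbitRel.Quotient.forall_ncard_orbit h ω
    _ = Nat.card α := nat_card_eq_sum_ncard_orbit.symm

theorem mul_card_quotient_lt_card {n : ℕ} (h : ∀ x : α, n ≤ (orbit G x).ncard) {x₀ : α}
    (h₀ : n < (orbit G x₀).ncard) :
    n * Nat.card (orbitRel.Quotient G α) < Nat.card α := by
  have := Fintype.ofFinite (orbitRel.Quotient G α)
  calc n * Nat.card (orbitRel.Quotient G α) = ∑ _ω : orbitRel.Quotient G α, n := by
        simp [Nat.card_eq_fintype_card, mul_comm]
    _ < ∑ ω : orbitRel.Quotient G α, ω.orbit.ncard :=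
        Finset.sum_lt_sum (fun ω _ => orbitRel.Quotient.forall_ncard_orbit h ω)
          ⟨Quotient.mk'' x₀, Finset.mem_univ _, by rwa [orbitRel.Quotient.orbit_mk]⟩
    _ = Nat.card α := nat_card_eq_sum_ncard_orbit.symm

theorem card_le_mul_card_quotient {n : ℕ} (h : ∀ x : α, (orbit G x).ncard ≤ n) :
    Nat.card α ≤ n * Nat.card (orbitRel.Quotient G α) := by
  have := Fintype.ofFinite (orbitRel.Quotient G α)
  calc Nat.card α = ∑ ω : orbitRel.Quotient G α, ω.orbit.ncard := nat_card_eq_sum_ncard_orbit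
    _ ≤ ∑ _ω : orbitRel.Quotient G α, n :=
        Finset.sum_le_sum fun ω _ => orbitRel.Quotient.forall_ncard_orbit (P := (· ≤ n)) h ω
    _ = n * Nat.card (orbitRel.Quotient G α) := by
        simp [Nat.card_eq_fintype_card, mul_comm]

end MulAction

namespace Matrix

variable {ι K : Type*} [Fintype ι] [DecidableEq ι] [Field K]

theorem inv_smul_of_ne_zero {c : K} (hc : c ≠ 0) (A : Matrix ι ι K) :
    (c • A)⁻¹ = c⁻¹ • A⁻¹ := by
  by_cases hA : IsUnit A.det
  · exact inv_smul' A (Units.mk0 c hc) hA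
  · have hcA : ¬IsUnit (c • A).det := by
      rwa [det_smul, IsUnit.mul_iff, and_iff_right ((Ne.isUnit hc).pow _)]
    rw [nonsing_inv_apply_not_isUnit _ hA, nonsing_inv_apply_not_isUnit _ hcA, smul_zero]

theorem tendsto_inv_of_tendsto_one [TopologicalSpace K] [IsTopologicalDivisionRing K]
    {β : Type*} {l : Filter β} {f : β → Matrix ι ι K} (h : Filter.Tendsto f l (nhds 1)) :
    Filter.Tendsto (fun b => (f b)⁻¹) l (nhds 1) := by
  have hdet : ContinuousAt Ring.inverse (1 : Matrix ι ι K).det := by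
    rw [det_one, Ring.inverse_eq_inv']
    exact continuousAt_inv₀ one_ne_zero
  simpa only [inv_one, Function.comp_def] using (continuousAt_matrix_inv 1 hdet).tendsto.comp h

end Matrix

namespace NCPair

open MulAction Subgroup

variable {k : ℕ} (p q : NCPair k)

theorem subset_orbit (x : Fin (2 * k)) :
    {x, p.1 x, q.1 x} ⊆ orbit (closure ({p.1, q.1} : Set (Equiv.Perm (Fin (2 * k))))) x := by
  rintro y (rfl | rfl | rfl)
  · exact mem_orbit_self y
  · exact ⟨⟨p.1, subset_closure (Set.mem_insert _ _)⟩, rfl⟩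
  · exact ⟨⟨q.1, subset_closure (Set.mem_insert_of_mem _ rfl)⟩, rfl⟩

theorem two_le_ncard_orbit (x : Fin (2 * k)) :
    2 ≤ (orbit (closure ({p.1, q.1} : Set (Equiv.Perm (Fin (2 * k))))) x).ncard := by
  have hpair : {x, p.1 x} ⊆ ({x, p.1 x, q.1 x} : Set (Fin (2 * k))) :=
    Set.insert_subset_insert (Set.singleton_subset_iff.2 (Set.mem_insert _ _))
  exact (Set.ncard_pair (p.2.2.1 x).symm).ge.trans
    (Set.ncard_le_ncard (hpair.trans (subset_orbit p q x)))

theorem loops_le : loops p q ≤ k := by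
  have := mul_card_quotient_le_card (two_le_ncard_orbit p q)
  rw [Nat.card_fin] at this
  exact Nat.le_of_mul_le_mul_left this two_pos

theorem loops_lt_of_ne (hpq : p ≠ q) : loops p q < k := by
  obtain ⟨x, hx⟩ : ∃ x, p.1 x ≠ q.1 x := by
    by_contra! h
    exact hpq (Subtype.ext (Equiv.ext h))
  have h3 : 2 < (orbit (closure ({p.1, q.1} : Set (Equiv.Perm (Fin (2 * k))))) x).ncard := by
    refine (Set.ncard_eq_three.2 ?_).ge.trans (Set.ncard_le_ncard (subset_orbit p q x))
    exact ⟨x, p.1 x, q.1 x, (p.2.2.1 x).symm, (q.2.2.1 x).symm, hx, rfl⟩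
  have := mul_card_quotient_lt_card (two_le_ncard_orbit p q) h3
  rw [Nat.card_fin] at this
  exact Nat.lt_of_mul_lt_mul_left this

open scoped Pointwise in
theorem orbit_subset_pair (x : Fin (2 * k)) :
    orbit (closure ({p.1, p.1} : Set (Equiv.Perm (Fin (2 * k))))) x ⊆ {x, p.1 x} := by
  have hle : closure ({p.1, p.1} : Set (Equiv.Perm (Fin (2 * k)))) ≤
      stabilizer (Equiv.Perm (Fin (2 * k))) ({x, p.1 x} : Set (Fin (2 * k))) := by
    rw [closure_le, Set.pair_eq_singleton, Set.singleton_subset_iff, SetLike.mem_coe,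
      mem_stabilizer_iff, Set.smul_set_insert, Set.smul_set_singleton, Equiv.Perm.smul_def,
      Equiv.Perm.smul_def, p.2.1, Set.pair_comm]
  rintro _ ⟨g, rfl⟩
  have hg : g.1 • ({x, p.1 x} : Set (Fin (2 * k))) = {x, p.1 x} := hle g.2
  rw [← hg]
  exact Set.smul_mem_smul_set (Set.mem_insert x _)

theorem loops_self : loops p p = k := by
  refine le_antisymm (loops_le p p) (Nat.le_of_mul_le_mul_left ?_ two_pos)
  have := card_le_mul_card_quotient fun x =>
    (Set.ncard_le_ncard (orbit_subset_pair p x)).trans (Set.ncard_pair (p.2.2.1 x).symm).le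
  rwa [Nat.card_fin] at this

end NCPair

open Filter Topology

theorem tendsto_inv_pow_smul_gram (k : ℕ) :
    Tendsto (fun n : ℕ => ((n : ℝ) ^ k)⁻¹ • Gram k n) atTop (𝓝 1) := by
  refine tendsto_pi_nhds.2 fun p => tendsto_pi_nhds.2 fun q => ?_
  simp only [Matrix.smul_apply, Gram, smul_eq_mul, Matrix.one_apply]
  split_ifs with hpq
  · subst hpq
    refine tendsto_const_nhds.congr' ?_
    filter_upwards [eventually_ne_atTop 0] with n hn
    rw [NCPair.loops_self, inv_mul_cancel₀ (by positivity)]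
  · simpa only [Function.comp_def, div_eq_inv_mul] using
      (tendsto_pow_div_pow_atTop_zero (𝕜 := ℝ) (NCPair.loops_lt_of_ne p q hpq)).comp
        tendsto_natCast_atTop_atTop

theorem weingarten_entry_tendsto_general (k : ℕ) (p q : NCPair k) :
    Filter.Tendsto (fun n : ℕ => (n : ℝ) ^ k * (Gram k n)⁻¹ p q)
      Filter.atTop (nhds (if p = q then 1 else 0)) := by
  have hinv := Matrix.tendsto_inv_of_tendsto_one (tendsto_inv_pow_smul_gram k)
  have hpq := tendsto_pi_nhds.1 (tendsto_pi_nhds.1 hinv p) q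
  rw [Matrix.one_apply] at hpq
  refine hpq.congr' ?_
  filter_upwards [eventually_ne_atTop 0] with n hn
  rw [Matrix.inv_smul_of_ne_zero (by positivity), inv_inv, Matrix.smul_apply, smul_eq_mul]

/-- As n → ∞, the normalised Weingarten matrix entry n^k · W_{kn}(p,q)
converges to 1 if p = q and to 0 if p ≠ q. -/
theorem weingarten_entry_tendsto (k : ℕ) (hk : 1 ≤ k) (p q : NCPair k) :
    Filter.Tendsto (fun n : ℕ => (n : ℝ) ^ k * (Gram k n)⁻¹ p q)
      Filter.atTop (nhds (if p = q then 1 else 0)) :=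
  weingarten_entry_tendsto_general k p q
end

section
/- Fix k ≥ 1 and p, q ∈ D(k). There exists n₀ such that for every integer n ≥ n₀ the Weingarten matrix entry is given by the absolutely convergent path expansion n^k · W_{kn}(p,q) = ∑_{l=0}^∞ (−1)^l ∑_P n^{−d(P)}, where the inner sum is over all paths P = (p₀, p₁, …, p_l) in D(k) with p₀ = p, p_l = q and p_{i−1} ≠ p_i for each 1 ≤ i ≤ l, and d(P) = ∑_{i=1}^l d(p_{i−1}, p_i). -/
open scoped BigOperators

/-- The distance along a path P = (p₀,…,p_l): d(P) = ∑ d(p_{i-1}, p_i). -/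
noncomputable def pathDist {k l : ℕ} (P : Fin (l + 1) → NCPair k) : ℕ :=
  ∑ i : Fin l, loopDist (P i.castSucc) (P i.succ)

open Classical in
/-- The inner sum ∑_P n^{-d(P)} over all paths of length l from p to q
(consecutive entries distinct). -/
noncomputable def pathTerm (k n : ℕ) (p q : NCPair k) (l : ℕ) : ℝ :=
  ∑ P ∈ Finset.univ.filter
      (fun P : Fin (l + 1) → NCPair k =>
        P 0 = p ∧ P (Fin.last l) = q ∧ ∀ i : Fin l, P i.castSucc ≠ P i.succ),
    ((n : ℝ)⁻¹) ^ pathDist P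

/-! Every loop of `p ∪ q` passes through at least two points, all of them exactly two when
`p = q`, and one of them at least three when `p ≠ q` (at a point where `p x ≠ q x`). Hence
`l(p, p) = k` and `l(p, q) < k` otherwise, so `G_{kn} = n^k (1 + T)` with `T(p, q) = n^{-d(p,q)}`
off the diagonal and `T(p, p) = 0`. For `n > |D(k)|` the row sums of `T` are below `1`, so
`n^k W_{kn} = (1 + T)⁻¹ = ∑ (-T)^l` is a Neumann series; as `T` vanishes on the diagonal, the
`(p, q)` entry of `T^l` is the sum of `n^{-d(P)}` over the paths with distinct consecutive steps. -/

open scoped Pointwise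

namespace MulAction

variable {G α : Type*} [Group G] [MulAction G α]

theorem orbit_closure_subset {S : Set G} {T : Set α} (hS : ∀ s ∈ S, s • T = T) {x : α}
    (hx : x ∈ T) : orbit (Subgroup.closure S) x ⊆ T := by
  have hle : Subgroup.closure S ≤ stabilizer G T := (Subgroup.closure_le _).2 hS
  rintro _ ⟨g, rfl⟩
  rw [← hle g.2]
  exact Set.smul_mem_smul_set hx

variable [Finite α]

theorem card_eq_sum_card_orbit [Fintype (orbitRel.Quotient G α)] :
    Nat.card α = ∑ ω : orbitRel.Quotient G α, Nat.card ω.orbit := by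
  rw [Nat.card_congr (selfEquivSigmaOrbits' G α), Nat.card_sigma]

theorem card_eq_mul_card_quotient {m : ℕ} (h : ∀ x : α, Nat.card (orbit G x) = m) :
    Nat.card α = m * Nat.card (orbitRel.Quotient G α) := by
  classical
  have := Fintype.ofFinite (orbitRel.Quotient G α)
  calc Nat.card α = ∑ ω : orbitRel.Quotient G α, Nat.card ω.orbit := card_eq_sum_card_orbit
    _ = ∑ _ω : orbitRel.Quotient G α, m := Finset.sum_congr rfl fun ω _ =>
          Quotient.inductionOn' ω h
    _ = m * Nat.card (orbitRel.Quotient G α) := by simp [mul_comm]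

theorem mul_card_quotient_lt {m : ℕ} (h : ∀ x : α, m ≤ Nat.card (orbit G x)) {x₀ : α}
    (h₀ : m < Nat.card (orbit G x₀)) : m * Nat.card (orbitRel.Quotient G α) < Nat.card α := by
  classical
  have := Fintype.ofFinite (orbitRel.Quotient G α)
  calc m * Nat.card (orbitRel.Quotient G α) = ∑ _ω : orbitRel.Quotient G α, m := by
        simp [mul_comm]
    _ < ∑ ω : orbitRel.Quotient G α, Nat.card ω.orbit :=
        Finset.sum_lt_sum (fun ω _ => Quotient.inductionOn' ω h)
          ⟨Quotient.mk'' x₀, Finset.mem_univ _, h₀⟩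
    _ = Nat.card α := card_eq_sum_card_orbit.symm

end MulAction

namespace Equiv.Perm

open MulAction

variable {α : Type*} {σ τ : Perm α}

theorem mem_orbit_closure {S : Set (Perm α)} (hσ : σ ∈ S) (x : α) :
    σ x ∈ orbit (Subgroup.closure S) x :=
  ⟨⟨σ, Subgroup.subset_closure hσ⟩, rfl⟩

theorem orbit_closure_singleton_of_involutive (hσ : Function.Involutive σ) (x : α) :
    orbit (Subgroup.closure {σ}) x = {x, σ x} := by
  refine (orbit_closure_subset ?_ (Set.mem_insert x _)).antisymm ?_
  · rintro _ rfl
    rw [Set.smul_set_insert, Set.smul_set_singleton, Perm.smul_def, Perm.smul_def, hσ x,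
      Set.pair_comm]
  · rintro _ (rfl | rfl)
    · exact mem_orbit_self _
    · exact mem_orbit_closure (Set.mem_singleton σ) _

variable [Finite α]

theorem card_eq_two_mul_card_quotient_closure_singleton (hσ : Function.Involutive σ)
    (hfix : ∀ x, σ x ≠ x) :
    Nat.card α = 2 * Nat.card (orbitRel.Quotient (Subgroup.closure {σ}) α) :=
  card_eq_mul_card_quotient fun x => by
    rw [orbit_closure_singleton_of_involutive hσ, Nat.card_coe_set_eq,
      Set.ncard_pair (hfix x).symm]

theorem two_mul_card_quotient_closure_pair_lt (hσ : ∀ x, σ x ≠ x) (hτ : ∀ x, τ x ≠ x)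
    (hστ : σ ≠ τ) :
    2 * Nat.card (orbitRel.Quotient (Subgroup.closure {σ, τ}) α) < Nat.card α := by
  obtain ⟨x₀, hx₀⟩ := not_forall.1 (mt Equiv.ext hστ)
  refine mul_card_quotient_lt (fun x => ?_) (x₀ := x₀) ?_
  · rw [Nat.card_coe_set_eq, ← Set.ncard_pair (hσ x).symm]
    refine Set.ncard_le_ncard ?_ (Set.toFinite _)
    rintro _ (rfl | rfl)
    exacts [mem_orbit_self _, mem_orbit_closure (Set.mem_insert _ _) _]
  · calc 2 < ({x₀, σ x₀, τ x₀} : Set α).ncard := by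
          rw [Set.ncard_eq_three.2 ⟨x₀, σ x₀, τ x₀, (hσ x₀).symm, (hτ x₀).symm, hx₀, rfl⟩]
          norm_num
      _ ≤ Nat.card (orbit (Subgroup.closure {σ, τ}) x₀) := by
          rw [Nat.card_coe_set_eq]
          refine Set.ncard_le_ncard ?_ (Set.toFinite _)
          rintro _ (rfl | rfl | rfl)
          exacts [mem_orbit_self _, mem_orbit_closure (Set.mem_insert _ _) _,
            mem_orbit_closure (Set.mem_insert_of_mem _ (Set.mem_singleton τ)) _]

end Equiv.Perm

namespace Matrix

section Path

variable {ι R : Type*} [Fintype ι] [DecidableEq ι] [CommSemiring R]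

theorem pow_apply_eq_sum_path (A : Matrix ι ι R) (l : ℕ) (i j : ι) :
    (A ^ l) i j = ∑ P : Fin (l + 1) → ι with P 0 = i ∧ P (Fin.last l) = j,
      ∏ t : Fin l, A (P t.castSucc) (P t.succ) := by
  rw [Finset.sum_filter]
  induction l generalizing i with
  | zero =>
    rw [pow_zero, one_apply, ← (Equiv.funUnique (Fin 1) ι).symm.sum_comp]
    simp [ite_and, eq_comm]
  | succ l ih =>
    rw [pow_succ', mul_apply, ← (Fin.consEquiv fun _ => ι).sum_comp, Fintype.sum_prod_type]
    simp only [ih, Finset.mul_sum]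
    rw [Finset.sum_comm]
    simp [Fin.prod_univ_succ, ite_and]

end Path

attribute [local instance] Matrix.linftyOpSeminormedAddCommGroup
  Matrix.linftyOpNormedAddCommGroup Matrix.linftyOpNormedRing Matrix.linftyOpNormedAlgebra

theorem linfty_opNorm_le_card_mul {m n α : Type*} [Fintype m] [Fintype n]
    [SeminormedAddCommGroup α] {A : Matrix m n α} {c : ℝ} (hc : 0 ≤ c)
    (h : ∀ i j, ‖A i j‖ ≤ c) : ‖A‖ ≤ Fintype.card n * c := by
  change ‖fun i => WithLp.toLp 1 (A i)‖ ≤ _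
  refine (pi_norm_le_iff_of_nonneg (by positivity)).2 fun i => ?_
  rw [PiLp.norm_eq_of_L1]
  simpa using Finset.sum_le_sum fun j (_ : j ∈ Finset.univ) => h i j

section Neumann

variable {ι 𝕜 : Type*} [Fintype ι] [DecidableEq ι] [NontriviallyNormedField 𝕜] [CompleteSpace 𝕜]

-- `Matrix.instCompleteSpace` is stated for the product uniformity, which is the uniformity of
-- this norm only up to unfolding, so instance search does not find it.
theorem linftyOp_hasSummableGeomSeries : HasSummableGeomSeries (Matrix ι ι 𝕜) :=
  have : @CompleteSpace (Matrix ι ι 𝕜) PseudoMetricSpace.toUniformSpace :=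
    FiniteDimensional.complete 𝕜 _
  inferInstance

attribute [local instance] linftyOp_hasSummableGeomSeries

theorem isUnit_one_add_of_linfty_opNorm_lt_one {A : Matrix ι ι 𝕜} (hA : ‖A‖ < 1) :
    IsUnit (1 + A) := by
  simpa [sub_eq_add_neg] using isUnit_one_sub_of_norm_lt_one (x := -A) (by rwa [norm_neg])

theorem hasSum_inv_one_add_apply {A : Matrix ι ι 𝕜} (hA : ‖A‖ < 1) (i j : ι) :
    HasSum (fun l : ℕ => (-1) ^ l * (A ^ l) i j) ((1 + A)⁻¹ i j) := by
  have hA' : ‖-A‖ < 1 := by rwa [norm_neg]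
  have hright := mul_neg_geom_series (-A) hA'
  rw [sub_neg_eq_add] at hright
  have hpow (l : ℕ) : ((-A) ^ l) i j = (-1) ^ l * (A ^ l) i j := by
    rw [← neg_one_smul 𝕜 A, smul_pow, smul_apply, smul_eq_mul]
  simp only [← hpow, inv_eq_right_inv hright]
  exact Pi.hasSum.1 (Pi.hasSum.1 (summable_geometric_of_norm_lt_one hA').hasSum i) j

end Neumann

end Matrix

noncomputable def offDiagGram (k n : ℕ) : Matrix (NCPair k) (NCPair k) ℝ :=
  Matrix.of fun p q => if p = q then 0 else ((n : ℝ)⁻¹) ^ loopDist p q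

section Weingarten

variable {k n : ℕ}

theorem loops_self (p : NCPair k) : loops p p = k := by
  have h := Equiv.Perm.card_eq_two_mul_card_quotient_closure_singleton p.2.1 p.2.2.1
  rw [Nat.card_fin] at h
  rw [loops, Set.pair_eq_singleton]
  omega

theorem loops_lt_of_ne {p q : NCPair k} (hpq : p ≠ q) : loops p q < k := by
  have h := Equiv.Perm.two_mul_card_quotient_closure_pair_lt p.2.2.1 q.2.2.1
    (Subtype.val_injective.ne hpq)
  rw [Nat.card_fin] at h
  rw [loops]
  omega

theorem loops_le (p q : NCPair k) : loops p q ≤ k := by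
  rcases eq_or_ne p q with rfl | hpq
  · exact (loops_self p).le
  · exact (loops_lt_of_ne hpq).le

theorem loopDist_pos {p q : NCPair k} (hpq : p ≠ q) : 0 < loopDist p q := by
  have := loops_lt_of_ne hpq
  rw [loopDist]
  omega

theorem gram_eq_smul_one_add_offDiagGram (hn : n ≠ 0) :
    Gram k n = ((n : ℝ) ^ k) • (1 + offDiagGram k n) := by
  ext p q
  have hn' : (n : ℝ) ≠ 0 := Nat.cast_ne_zero.2 hn
  rcases eq_or_ne p q with rfl | hpq
  · simp [Gram, offDiagGram, loops_self]
  · simp only [Gram, offDiagGram, Matrix.smul_apply, Matrix.add_apply, Matrix.one_apply_ne hpq,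
      Matrix.of_apply, if_neg hpq, zero_add, smul_eq_mul]
    rw [inv_pow, loopDist, ← pow_sub₀ _ hn' (Nat.sub_le k (loops p q)),
      Nat.sub_sub_self (loops_le p q)]

theorem prod_offDiagGram_path {l : ℕ} (P : Fin (l + 1) → NCPair k) :
    ∏ t : Fin l, offDiagGram k n (P t.castSucc) (P t.succ) =
      if ∀ t : Fin l, P t.castSucc ≠ P t.succ then ((n : ℝ)⁻¹) ^ pathDist P else 0 := by
  split_ifs with h
  · rw [pathDist, ← Finset.prod_pow_eq_pow_sum]
    exact Finset.prod_congr rfl fun t _ => if_neg (h t)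
  · obtain ⟨t, ht⟩ := not_forall_not.1 h
    exact Finset.prod_eq_zero (Finset.mem_univ t) (if_pos ht)

theorem pathTerm_eq_pow_apply (p q : NCPair k) (l : ℕ) :
    pathTerm k n p q l = (offDiagGram k n ^ l) p q := by
  simp only [pathTerm, Matrix.pow_apply_eq_sum_path, prod_offDiagGram_path, Finset.sum_filter,
    ite_and]

theorem norm_offDiagGram_apply_le (hn : 1 ≤ n) (p q : NCPair k) :
    ‖offDiagGram k n p q‖ ≤ (n : ℝ)⁻¹ := by
  rcases eq_or_ne p q with rfl | hpq
  · simp [offDiagGram]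
  · rw [offDiagGram, Matrix.of_apply, if_neg hpq, norm_pow, norm_inv, Real.norm_natCast]
    exact pow_le_of_le_one (by positivity) (inv_le_one_of_one_le₀ (Nat.one_le_cast.2 hn))
      (loopDist_pos hpq).ne'

attribute [local instance] Matrix.linftyOpNormedAddCommGroup Matrix.linftyOpNormedRing

theorem norm_offDiagGram_lt_one (hn : Fintype.card (NCPair k) < n) : ‖offDiagGram k n‖ < 1 := by
  have hn0 : (0 : ℝ) < n := by exact_mod_cast (Nat.zero_le _).trans_lt hn
  calc ‖offDiagGram k n‖ ≤ Fintype.card (NCPair k) * (n : ℝ)⁻¹ :=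
        Matrix.linfty_opNorm_le_card_mul (by positivity)
          (norm_offDiagGram_apply_le ((Nat.zero_le _).trans_lt hn))
    _ < 1 := by
        rw [← div_eq_mul_inv, div_lt_one hn0]
        exact_mod_cast hn

theorem pow_smul_inv_gram (hn : n ≠ 0) (hT : IsUnit (1 + offDiagGram k n)) :
    ((n : ℝ) ^ k) • (Gram k n)⁻¹ = (1 + offDiagGram k n)⁻¹ := by
  have hc : (n : ℝ) ^ k ≠ 0 := pow_ne_zero _ (Nat.cast_ne_zero.2 hn)
  have := invertibleOfNonzero hc
  rw [gram_eq_smul_one_add_offDiagGram hn,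
    Matrix.inv_smul _ _ ((Matrix.isUnit_iff_isUnit_det _).1 hT), smul_smul, mul_invOf_self,
    one_smul]

theorem hasSum_pathTerm (hn : Fintype.card (NCPair k) < n) (p q : NCPair k) :
    HasSum (fun l : ℕ => (-1 : ℝ) ^ l * pathTerm k n p q l) ((n : ℝ) ^ k * (Gram k n)⁻¹ p q) := by
  have hT := norm_offDiagGram_lt_one hn
  have hinv := pow_smul_inv_gram (by omega) (Matrix.isUnit_one_add_of_linfty_opNorm_lt_one hT)
  simpa only [pathTerm_eq_pow_apply, ← smul_eq_mul, ← Matrix.smul_apply, hinv] using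
    Matrix.hasSum_inv_one_add_apply hT p q

end Weingarten

theorem weingarten_path_expansion_general (k : ℕ) (p q : NCPair k) :
    ∃ n₀ : ℕ, ∀ n : ℕ, n₀ ≤ n →
      Summable (fun l : ℕ => |(-1 : ℝ) ^ l * pathTerm k n p q l|) ∧
      (n : ℝ) ^ k * (Gram k n)⁻¹ p q = ∑' l : ℕ, (-1 : ℝ) ^ l * pathTerm k n p q l := by
  refine ⟨Fintype.card (NCPair k) + 1, fun n hn => ?_⟩
  have h := hasSum_pathTerm hn p q
  exact ⟨summable_abs_iff.2 h.summable, h.tsum_eq.symm⟩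

/-- Path expansion of the Weingarten matrix: for n large enough,
n^k · W_{kn}(p,q) = ∑_{l=0}^∞ (−1)^l ∑_P n^{−d(P)}, absolutely convergent. -/
theorem weingarten_path_expansion (k : ℕ) (hk : 1 ≤ k) (p q : NCPair k) :
    ∃ n₀ : ℕ, ∀ n : ℕ, n₀ ≤ n →
      Summable (fun l : ℕ => |(-1 : ℝ) ^ l * pathTerm k n p q l|) ∧
      (n : ℝ) ^ k * (Gram k n)⁻¹ p q = ∑' l : ℕ, (-1 : ℝ) ^ l * pathTerm k n p q l :=
  weingarten_path_expansion_general k p q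
end
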